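/- For s'≥s≥2 with s and s' both even, q(P_s⊠P_{s'}) ≤ s+s'−2: choosing A∈S(P_s) with spectrum {±1,±2,…,±2^{s/2−1}} and A'∈S(P_{s'}) with spectrum {±1,±2,…,±2^{s'/2−1}} (which exist with SSP and nonzero diagonals by the nonzero-diagonal realization theorem), the Kronecker product A⊗A' lies in S(P_s⊠P_{s'}) and has at most s+s'−2 distinct eigenvalues {±1,±2,…,±2^{s/2+s'/2−2}}. -/

import Mathlib

open Matrix Kronecker

/-- `S(G)`: real symmetric matrices whose off-diagonal nonzero pattern is the edge set of `G`. -/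
def inS {V : Type*} (G : SimpleGraph V) (A : Matrix V V ℝ) : Prop :=
  A.IsSymm ∧ ∀ i j, i ≠ j → (A i j ≠ 0 ↔ G.Adj i j)

/-- `q(G)`: the minimum number of distinct eigenvalues among matrices in `S(G)`. -/
noncomputable def qGraph {V : Type*} [Fintype V] [DecidableEq V] (G : SimpleGraph V) : ℕ :=
  sInf {k : ℕ | ∃ A : Matrix V V ℝ, inS G A ∧ (spectrum ℝ A).ncard = k}

/-- The strong product of two simple graphs. -/
def strongProd {V W : Type*} (G : SimpleGraph V) (G' : SimpleGraph W) :
    SimpleGraph (V × W) where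
  Adj p q := (p.1 = q.1 ∧ G'.Adj p.2 q.2) ∨ (p.2 = q.2 ∧ G.Adj p.1 q.1) ∨
      (G.Adj p.1 q.1 ∧ G'.Adj p.2 q.2)
  symm := by
    constructor
    rintro p q (⟨h1, h2⟩ | ⟨h1, h2⟩ | ⟨h1, h2⟩)
    · exact Or.inl ⟨h1.symm, h2.symm⟩
    · exact Or.inr (Or.inl ⟨h1.symm, h2.symm⟩)
    · exact Or.inr (Or.inr ⟨h1.symm, h2.symm⟩)
  loopless := by
    constructor
    rintro p (⟨-, h⟩ | ⟨-, h⟩ | ⟨h, -⟩)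
    · exact G'.loopless.irrefl _ h
    · exact G.loopless.irrefl _ h
    · exact G.loopless.irrefl _ h

/-!
The eigenvalues of `A ⊗ₖ A'` are products of eigenvalues of `A` and `A'`, and a product of
`±2 ^ i` (`i < a`) and `±2 ^ j` (`j < b`) is `±2 ^ k` with `k < a + b - 1`. Realizing
`{±2 ^ i | i < s / 2}` on `P_s` and `{±2 ^ j | j < s' / 2}` on `P_{s'}` with nonzero diagonals
therefore gives a matrix in `S(P_s ⊠ P_{s'})` with at most `s + s' - 2` eigenvalues.
-/

open scoped Pointwise

theorem Matrix.IsHermitian.spectrum_kronecker_subset {m n : Type*} [Fintype m] [Fintype n]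
    [DecidableEq m] [DecidableEq n] {A : Matrix m m ℝ} {B : Matrix n n ℝ}
    (hA : A.IsHermitian) (hB : B.IsHermitian) :
    spectrum ℝ (A ⊗ₖ B) ⊆ spectrum ℝ A * spectrum ℝ B := by
  let u : unitary (Matrix (m × n) (m × n) ℝ) :=
    ⟨_, kronecker_mem_unitary hA.eigenvectorUnitary.2 hB.eigenvectorUnitary.2⟩
  have hdiag : A ⊗ₖ B =
      Unitary.conjStarAlgAut ℝ _ u
        (diagonal fun p => hA.eigenvalues p.1 * hB.eigenvalues p.2) := by
    conv_lhs => rw [hA.spectral_theorem, hB.spectral_theorem]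
    simp [mul_kronecker_mul, diagonal_kronecker_diagonal, star_eq_conjTranspose,
      kroneckerMap_transpose, u]
  rw [hdiag, AlgEquiv.spectrum_eq, spectrum_diagonal, hA.spectrum_real_eq_range_eigenvalues,
    hB.spectrum_real_eq_range_eigenvalues]
  rintro _ ⟨p, rfl⟩
  exact Set.mul_mem_mul ⟨p.1, rfl⟩ ⟨p.2, rfl⟩

theorem qGraph_le_ncard_spectrum {V : Type*} [Fintype V] [DecidableEq V] {G : SimpleGraph V}
    {A : Matrix V V ℝ} (hA : inS G A) : qGraph G ≤ (spectrum ℝ A).ncard :=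
  Nat.sInf_le ⟨A, hA, rfl⟩

theorem inS.isHermitian {V : Type*} {G : SimpleGraph V} {A : Matrix V V ℝ} (hA : inS G A) :
    A.IsHermitian :=
  isHermitian_iff_isSymm.mpr hA.1

noncomputable def signedPowersOfTwo (n : ℕ) : Finset ℝ :=
  (Finset.range n).image (fun k => (2 : ℝ) ^ k) ∪
    (Finset.range n).image (fun k => -(2 : ℝ) ^ k)

theorem mem_signedPowersOfTwo {n : ℕ} {x : ℝ} :
    x ∈ signedPowersOfTwo n ↔ ∃ k < n, x = 2 ^ k ∨ x = -2 ^ k := by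
  simp only [signedPowersOfTwo, Finset.mem_union, Finset.mem_image, Finset.mem_range]
  grind

theorem zero_notMem_signedPowersOfTwo (n : ℕ) : (0 : ℝ) ∉ signedPowersOfTwo n := by
  rw [mem_signedPowersOfTwo]
  rintro ⟨k, -, hk | hk⟩ <;> have := pow_pos (two_pos (α := ℝ)) k <;> linarith

theorem card_signedPowersOfTwo (n : ℕ) : (signedPowersOfTwo n).card = 2 * n := by
  have hinj : Function.Injective fun k : ℕ => (2 : ℝ) ^ k :=
    pow_right_injective₀ two_pos (by norm_num)
  rw [signedPowersOfTwo, Finset.card_union_of_disjoint, Finset.card_image_of_injective _ hinj,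
    Finset.card_image_of_injective _ fun _ _ h => hinj (neg_injective h), Finset.card_range,
    two_mul]
  simp only [Finset.disjoint_left, Finset.mem_image, Finset.mem_range]
  rintro _ ⟨a, -, rfl⟩ ⟨b, -, hb⟩
  have := pow_pos (two_pos (α := ℝ)) a
  have := pow_pos (two_pos (α := ℝ)) b
  linarith

theorem signedPowersOfTwo_mul_subset (a b : ℕ) :
    (signedPowersOfTwo a : Set ℝ) * signedPowersOfTwo b ⊆ signedPowersOfTwo (a + b - 1) := by
  rintro _ ⟨x, hx, y, hy, rfl⟩
  rw [Finset.mem_coe, mem_signedPowersOfTwo] at hx hy ⊢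
  obtain ⟨i, hi, hx⟩ := hx
  obtain ⟨j, hj, hy⟩ := hy
  refine ⟨i + j, by omega, ?_⟩
  rcases hx with rfl | rfl <;> rcases hy with rfl | rfl <;> simp [pow_add]

theorem stmt19_general (s s' : ℕ) (hes : Even s) (hes' : Even s')
    -- nonzero-diagonal spectrum realization for paths, assumed as a hypothesis
    (hreal : ∀ (m : ℕ) (S : Finset ℝ), S.card = m → (0 : ℝ) ∉ S →
      ∃ A : Matrix (Fin m) (Fin m) ℝ, inS (SimpleGraph.pathGraph m) A ∧
        (∀ i, A i i ≠ 0) ∧ spectrum ℝ A = ↑S)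
    -- Kronecker products of matrices with nonzero diagonals realize the strong product
    (hkron : ∀ (m m' : ℕ) (G : SimpleGraph (Fin m)) (G' : SimpleGraph (Fin m'))
        (A : Matrix (Fin m) (Fin m) ℝ) (A' : Matrix (Fin m') (Fin m') ℝ),
      inS G A → inS G' A' → (∀ i, A i i ≠ 0) → (∀ i, A' i i ≠ 0) →
        inS (strongProd G G') (A ⊗ₖ A')) :
    qGraph (strongProd (SimpleGraph.pathGraph s) (SimpleGraph.pathGraph s')) ≤ s + s' - 2 := by
  obtain ⟨t, rfl⟩ := hes
  obtain ⟨t', rfl⟩ := hes'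
  obtain ⟨A, hA, hAdiag, hAspec⟩ := hreal (t + t) (signedPowersOfTwo t)
    (by rw [card_signedPowersOfTwo, two_mul]) (zero_notMem_signedPowersOfTwo t)
  obtain ⟨A', hA', hA'diag, hA'spec⟩ := hreal (t' + t') (signedPowersOfTwo t')
    (by rw [card_signedPowersOfTwo, two_mul]) (zero_notMem_signedPowersOfTwo t')
  have hspec : spectrum ℝ (A ⊗ₖ A') ⊆ signedPowersOfTwo (t + t' - 1) :=
    calc spectrum ℝ (A ⊗ₖ A') ⊆ spectrum ℝ A * spectrum ℝ A' :=
          hA.isHermitian.spectrum_kronecker_subset hA'.isHermitian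
      _ ⊆ signedPowersOfTwo (t + t' - 1) := by
          rw [hAspec, hA'spec]
          exact signedPowersOfTwo_mul_subset t t'
  calc qGraph _ ≤ (spectrum ℝ (A ⊗ₖ A')).ncard :=
        qGraph_le_ncard_spectrum (hkron _ _ _ _ A A' hA hA' hAdiag hA'diag)
    _ ≤ (signedPowersOfTwo (t + t' - 1)).card := by
        rw [← Set.ncard_coe_finset]
        exact Set.ncard_le_ncard hspec (Finset.finite_toSet _)
    _ = t + t + (t' + t') - 2 := by rw [card_signedPowersOfTwo]; omega

theorem stmt19 (s s' : ℕ) (hs : 2 ≤ s) (hss' : s ≤ s') (hes : Even s) (hes' : Even s')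
    -- nonzero-diagonal spectrum realization for paths, assumed as a hypothesis
    (hreal : ∀ (m : ℕ) (S : Finset ℝ), S.card = m → (0 : ℝ) ∉ S →
      ∃ A : Matrix (Fin m) (Fin m) ℝ, inS (SimpleGraph.pathGraph m) A ∧
        (∀ i, A i i ≠ 0) ∧ spectrum ℝ A = ↑S)
    -- Kronecker products of matrices with nonzero diagonals realize the strong product
    (hkron : ∀ (m m' : ℕ) (G : SimpleGraph (Fin m)) (G' : SimpleGraph (Fin m'))
        (A : Matrix (Fin m) (Fin m) ℝ) (A' : Matrix (Fin m') (Fin m') ℝ),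
      inS G A → inS G' A' → (∀ i, A i i ≠ 0) → (∀ i, A' i i ≠ 0) →
        inS (strongProd G G') (A ⊗ₖ A')) :
    qGraph (strongProd (SimpleGraph.pathGraph s) (SimpleGraph.pathGraph s')) ≤ s + s' - 2 :=
  stmt19_general s s' hes hes' hreal hkron
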